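/- arXiv:2301.08977 — 3 statements merged into one kernel-verified Lean document; each statement's English description precedes it below -/
import Mathlib

section
/- Let D > 0 be a non-square discriminant. The involution sending the integral binary quadratic form ax² + bxy + cy² to the form −cx² − bxy − ay² preserves the discriminant and descends to SL₂(ℤ)-equivalence classes; under the bijection between SL₂(ℤ)-classes of forms of discriminant D and the narrow class group Cl⁺ of ℚ(√D), it corresponds to the map A ↦ A·[(√D)] on Cl⁺, where [(√D)] is the narrow class of the principal ideal generated by √D. -/
open scoped NumberField nonZeroDivisors

/-- An integral binary quadratic form `a x² + b x y + c y²`. -/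
structure BQF where
  a : ℤ
  b : ℤ
  c : ℤ

namespace BQF

/-- Evaluation of a binary quadratic form. -/
def eval (Q : BQF) (x y : ℤ) : ℤ := Q.a * x ^ 2 + Q.b * x * y + Q.c * y ^ 2

/-- The discriminant `b² - 4ac`. -/
def disc (Q : BQF) : ℤ := Q.b ^ 2 - 4 * Q.a * Q.c

/-- The action of a `2 × 2` integer matrix `g` on a form:
`(g · Q)(x, y) = Q(g₀₀ x + g₀₁ y, g₁₀ x + g₁₁ y)`. -/
def transform (Q : BQF) (g : Matrix (Fin 2) (Fin 2) ℤ) : BQF where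
  a := Q.eval (g 0 0) (g 1 0)
  b := 2 * Q.a * (g 0 0) * (g 0 1) + Q.b * ((g 0 0) * (g 1 1) + (g 0 1) * (g 1 0)) +
       2 * Q.c * (g 1 0) * (g 1 1)
  c := Q.eval (g 0 1) (g 1 1)

/-- The action of `SL₂(ℤ)` on binary quadratic forms. -/
def SLAct (g : Matrix.SpecialLinearGroup (Fin 2) ℤ) (Q : BQF) : BQF :=
  Q.transform (g : Matrix (Fin 2) (Fin 2) ℤ)

/-- Two forms are (properly) equivalent if they are in the same `SL₂(ℤ)`-orbit. -/
def Equiv (Q Q' : BQF) : Prop := ∃ g : Matrix.SpecialLinearGroup (Fin 2) ℤ, SLAct g Q = Q'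

/-- The involution `ax² + bxy + cy² ↦ -cx² - bxy - ay²`. -/
def invol (Q : BQF) : BQF := ⟨-Q.c, -Q.b, -Q.a⟩

theorem invol_disc (Q : BQF) : (invol Q).disc = Q.disc := by
  simp only [invol, disc]; ring

/-- `τ`, the root of `Q(x,1)` with `τ > τ'` (the other root), relative to a chosen square
root `sqD` of the discriminant which is positive under the distinguished real embedding. -/
def tau {K : Type*} [Field K] (sqD : K) (Q : BQF) : K :=
  (((-Q.b : ℤ) : K) + (if 0 < Q.a then sqD else -sqD)) / (((2 * Q.a : ℤ) : K))

end BQF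

namespace BQFAux

open BQF Matrix

theorem bqf_ext {Q Q' : BQF} (ha : Q.a = Q'.a) (hb : Q.b = Q'.b) (hc : Q.c = Q'.c) : Q = Q' := by
  cases Q; cases Q'; simp_all

theorem eval_transform (Q : BQF) (g : Matrix (Fin 2) (Fin 2) ℤ) (X Y : ℤ) :
    (Q.transform g).eval X Y
      = Q.eval (g 0 0 * X + g 0 1 * Y) (g 1 0 * X + g 1 1 * Y) := by
  simp only [transform, eval]; ring

theorem transform_transform (Q : BQF) (g h : Matrix (Fin 2) (Fin 2) ℤ) :
    (Q.transform g).transform h = Q.transform (g * h) := by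
  refine bqf_ext ?_ ?_ ?_ <;>
    simp only [transform, eval, Matrix.mul_apply, Fin.sum_univ_two] <;> ring

theorem transform_one (Q : BQF) : Q.transform 1 = Q := by
  refine bqf_ext ?_ ?_ ?_ <;>
    simp [transform, eval, Matrix.one_apply]

theorem disc_transform (Q : BQF) (g : Matrix (Fin 2) (Fin 2) ℤ) :
    (Q.transform g).disc = (g 0 0 * g 1 1 - g 0 1 * g 1 0) ^ 2 * Q.disc := by
  simp only [transform, eval, disc]; ring

theorem det_fin_two' (g : Matrix.SpecialLinearGroup (Fin 2) ℤ) :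
    (g : Matrix (Fin 2) (Fin 2) ℤ) 0 0 * (g : Matrix (Fin 2) (Fin 2) ℤ) 1 1
      - (g : Matrix (Fin 2) (Fin 2) ℤ) 0 1 * (g : Matrix (Fin 2) (Fin 2) ℤ) 1 0 = 1 := by
  have := g.property
  rwa [Matrix.det_fin_two] at this

theorem disc_SLAct (g : Matrix.SpecialLinearGroup (Fin 2) ℤ) (Q : BQF) :
    (SLAct g Q).disc = Q.disc := by
  rw [SLAct, disc_transform, det_fin_two', one_pow, one_mul]

theorem SLAct_SLAct (g h : Matrix.SpecialLinearGroup (Fin 2) ℤ) (Q : BQF) :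
    SLAct h (SLAct g Q) = SLAct (g * h) Q := by
  simp only [SLAct, Matrix.SpecialLinearGroup.coe_mul, transform_transform]

theorem equiv_refl (Q : BQF) : Equiv Q Q := ⟨1, by simp [SLAct, transform_one]⟩

theorem equiv_symm {Q Q' : BQF} (h : Equiv Q Q') : Equiv Q' Q := by
  obtain ⟨g, rfl⟩ := h
  exact ⟨g⁻¹, by rw [SLAct_SLAct, mul_inv_cancel, SLAct, Matrix.SpecialLinearGroup.coe_one,
    transform_one]⟩

theorem equiv_trans {Q Q' Q'' : BQF} (h : Equiv Q Q') (h' : Equiv Q' Q'') : Equiv Q Q'' := by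
  obtain ⟨g, rfl⟩ := h; obtain ⟨g', rfl⟩ := h'
  exact ⟨g * g', (SLAct_SLAct g g' Q).symm⟩

/-- the swap conjugate -/
def swapConj (g : Matrix.SpecialLinearGroup (Fin 2) ℤ) : Matrix.SpecialLinearGroup (Fin 2) ℤ :=
  ⟨![![(g : Matrix (Fin 2) (Fin 2) ℤ) 1 1, (g : Matrix (Fin 2) (Fin 2) ℤ) 1 0],
     ![(g : Matrix (Fin 2) (Fin 2) ℤ) 0 1, (g : Matrix (Fin 2) (Fin 2) ℤ) 0 0]], by
    refine (Matrix.det_fin_two _).trans ?_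
    simp only [Matrix.cons_val', Matrix.cons_val_zero, Matrix.cons_val_one, Matrix.head_cons,
      Matrix.empty_val', Matrix.cons_val_fin_one, Matrix.head_fin_const]
    have := det_fin_two' g
    linarith⟩

theorem invol_SLAct (g : Matrix.SpecialLinearGroup (Fin 2) ℤ) (Q : BQF) :
    invol (SLAct g Q) = SLAct (swapConj g) (invol Q) := by
  refine bqf_ext ?_ ?_ ?_ <;>
    simp only [SLAct, swapConj, invol, transform, eval, Matrix.cons_val', Matrix.cons_val_zero,
      Matrix.cons_val_one, Matrix.head_cons, Matrix.empty_val', Matrix.cons_val_fin_one,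
      Matrix.head_fin_const] <;> ring

theorem invol_equiv {Q Q' : BQF} (h : Equiv Q Q') : Equiv (invol Q) (invol Q') := by
  obtain ⟨g, rfl⟩ := h
  exact ⟨swapConj g, (invol_SLAct g Q).symm⟩

end BQFAux

namespace BQFAux

open BQF Matrix

theorem sq_of_a_eq_zero {Q : BQF} (h : Q.a = 0) : IsSquare Q.disc := ⟨Q.b, by simp [disc, h, sq]⟩

theorem sq_of_c_eq_zero {Q : BQF} (h : Q.c = 0) : IsSquare Q.disc := ⟨Q.b, by simp [disc, h, sq]⟩

theorem eval_smul (Q : BQF) (g x y : ℤ) : Q.eval (g * x) (g * y) = g ^ 2 * Q.eval x y := by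
  simp only [eval]; ring

/-- a positive primitively represented value exists -/
theorem exists_pos_value (Q : BQF) (hD : 0 < Q.disc) (hDns : ¬IsSquare Q.disc) :
    ∃ x y : ℤ, Int.gcd x y = 1 ∧ 0 < Q.eval x y := by
  have ha : Q.a ≠ 0 := fun h => hDns (sq_of_a_eq_zero h)
  -- first find any (x,y) ≠ (0,0) with positive value
  obtain ⟨x, y, hy, hpos⟩ : ∃ x y : ℤ, ¬(x = 0 ∧ y = 0) ∧ 0 < Q.eval x y := by
    rcases lt_or_gt_of_ne ha with ha' | ha'
    · refine ⟨-Q.b, 2 * Q.a, fun h => ha (by omega), ?_⟩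
      have : Q.eval (-Q.b) (2 * Q.a) = -Q.a * Q.disc := by simp only [eval, disc]; ring
      rw [this]
      exact mul_pos (by omega) hD
    · exact ⟨1, 0, by simp, by simpa [eval] using ha'⟩
  -- primitivize
  set g : ℕ := Int.gcd x y with hg
  have hg0 : g ≠ 0 := fun h => hy (Int.gcd_eq_zero_iff.mp h)
  refine ⟨x / g, y / g, Int.gcd_div_gcd_div_gcd (Nat.pos_of_ne_zero hg0), ?_⟩
  have hx : (g : ℤ) * (x / g) = x := Int.mul_ediv_cancel' (Int.gcd_dvd_left x y)
  have hyy : (g : ℤ) * (y / g) = y := Int.mul_ediv_cancel' (Int.gcd_dvd_right x y)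
  have := eval_smul Q (g : ℤ) (x / g) (y / g)
  rw [hx, hyy] at this
  nlinarith [sq_nonneg (g : ℤ), this, hpos, sq_nonneg ((g:ℤ) - 1)]

theorem exists_reduced (Q : BQF) (hD : 0 < Q.disc) (hDns : ¬IsSquare Q.disc) :
    ∃ Q' : BQF, Equiv Q Q' ∧ 0 < Q'.a ∧ Q'.c < 0 := by
  -- least positive primitively represented value
  obtain ⟨m, ⟨hm0, x, y, hxy, hxyv⟩, hmin⟩ :
      ∃ m : ℤ, (0 < m ∧ ∃ x y : ℤ, Int.gcd x y = 1 ∧ Q.eval x y = m) ∧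
        ∀ z, (0 < z ∧ ∃ x y : ℤ, Int.gcd x y = 1 ∧ Q.eval x y = z) → m ≤ z := by
    refine Int.exists_least_of_bdd ⟨0, fun z hz => le_of_lt hz.1⟩ ?_
    obtain ⟨x, y, h1, h2⟩ := exists_pos_value Q hD hDns
    exact ⟨Q.eval x y, h2, x, y, h1, rfl⟩
  obtain ⟨u, v, huv⟩ : ∃ u v, u * x + v * y = 1 := by
    obtain ⟨u, v, h⟩ := Int.isCoprime_iff_gcd_eq_one.mpr hxy
    exact ⟨u, v, h⟩
  -- the matrix with first column (x, y)
  set g : Matrix.SpecialLinearGroup (Fin 2) ℤ :=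
    ⟨![![x, -v], ![y, u]], by
      refine (Matrix.det_fin_two _).trans ?_
      simp only [Matrix.cons_val', Matrix.cons_val_zero, Matrix.cons_val_one, Matrix.head_cons,
        Matrix.empty_val', Matrix.cons_val_fin_one, Matrix.head_fin_const]
      linarith⟩ with hgdef
  set Q₁ : BQF := SLAct g Q with hQ₁
  have hent0 : (g : Matrix (Fin 2) (Fin 2) ℤ) 0 0 = x := rfl
  have hent1 : (g : Matrix (Fin 2) (Fin 2) ℤ) 1 0 = y := rfl
  have hent2 : (g : Matrix (Fin 2) (Fin 2) ℤ) 0 1 = -v := rfl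
  have hent3 : (g : Matrix (Fin 2) (Fin 2) ℤ) 1 1 = u := rfl
  have ha₁ : Q₁.a = m := by
    rw [hQ₁, SLAct]
    show Q.eval _ _ = m
    rw [hent0, hent1, hxyv]
  -- translation
  have h2a : (0:ℤ) < 2 * Q₁.a := by omega
  set r : ℤ := (Q₁.a - Q₁.b) % (2 * Q₁.a) with hr
  set k : ℤ := (Q₁.a - Q₁.b) / (2 * Q₁.a) with hk
  have hdm : 2 * Q₁.a * k + r = Q₁.a - Q₁.b := Int.mul_ediv_add_emod _ _
  have hr0 : 0 ≤ r := Int.emod_nonneg _ (by omega)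
  have hrlt : r < 2 * Q₁.a := Int.emod_lt_of_pos _ h2a
  set kmat : Matrix.SpecialLinearGroup (Fin 2) ℤ :=
    ⟨![![1, k], ![0, 1]], by
      refine (Matrix.det_fin_two _).trans ?_
      simp⟩ with hkmat
  set Q₂ : BQF := SLAct kmat Q₁ with hQ₂
  have hk0 : (kmat : Matrix (Fin 2) (Fin 2) ℤ) 0 0 = 1 := rfl
  have hk1 : (kmat : Matrix (Fin 2) (Fin 2) ℤ) 1 0 = 0 := rfl
  have hk2 : (kmat : Matrix (Fin 2) (Fin 2) ℤ) 0 1 = k := rfl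
  have hk3 : (kmat : Matrix (Fin 2) (Fin 2) ℤ) 1 1 = 1 := rfl
  have ha₂ : Q₂.a = Q₁.a := by
    rw [hQ₂, SLAct]
    show Q₁.eval _ _ = Q₁.a
    rw [hk0, hk1]
    simp [eval]
  have hb₂ : Q₂.b = 2 * Q₁.a * k + Q₁.b := by
    rw [hQ₂, SLAct]
    show 2 * Q₁.a * _ * _ + Q₁.b * (_ * _ + _ * _) + 2 * Q₁.c * _ * _ = _
    rw [hk0, hk1, hk2, hk3]
    ring
  have hdisc₂ : Q₂.disc = Q.disc := by
    rw [hQ₂, hQ₁, disc_SLAct, disc_SLAct]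
  have hb₂' : -Q₁.a < Q₂.b ∧ Q₂.b ≤ Q₁.a := by
    constructor <;> omega
  refine ⟨Q₂, ?_, ?_, ?_⟩
  · exact equiv_trans ⟨g, hQ₁.symm⟩ ⟨kmat, hQ₂.symm⟩
  · omega
  · -- show Q₂.c < 0
    by_contra hc
    push_neg at hc
    have hcne : Q₂.c ≠ 0 := fun h => hDns (hdisc₂ ▸ sq_of_c_eq_zero h)
    have hcpos : 0 < Q₂.c := by omega
    -- Q₂.c is primitively represented by Q
    have hcomb : SLAct kmat (SLAct g Q) = SLAct (g * kmat) Q := SLAct_SLAct g kmat Q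
    have hgk0 : ((g * kmat : Matrix.SpecialLinearGroup (Fin 2) ℤ) :
        Matrix (Fin 2) (Fin 2) ℤ) 0 1 = x * k - v := by
      rw [Matrix.SpecialLinearGroup.coe_mul, Matrix.mul_apply, Fin.sum_univ_two,
        hent0, hent2, hk2, hk3]
      ring
    have hgk1 : ((g * kmat : Matrix.SpecialLinearGroup (Fin 2) ℤ) :
        Matrix (Fin 2) (Fin 2) ℤ) 1 1 = y * k + u := by
      rw [Matrix.SpecialLinearGroup.coe_mul, Matrix.mul_apply, Fin.sum_univ_two,
        hent1, hent3, hk2, hk3]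
      ring
    have hc₂ : Q₂.c = Q.eval (x * k - v) (y * k + u) := by
      rw [hQ₂, hQ₁, hcomb, SLAct]
      show Q.eval _ _ = _
      rw [hgk0, hgk1]
    have hprim : Int.gcd (x * k - v) (y * k + u) = 1 := by
      have hdvd : (↑(Int.gcd (x * k - v) (y * k + u)) : ℤ) ∣ 1 := by
        have h1 : (↑(Int.gcd (x * k - v) (y * k + u)) : ℤ) ∣ x * k - v := Int.gcd_dvd_left _ _
        have h2 : (↑(Int.gcd (x * k - v) (y * k + u)) : ℤ) ∣ y * k + u := Int.gcd_dvd_right _ _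
        have : x * (y * k + u) - y * (x * k - v) = 1 := by linear_combination huv
        calc (↑(Int.gcd (x * k - v) (y * k + u)) : ℤ)
            ∣ x * (y * k + u) - y * (x * k - v) := dvd_sub (h2.mul_left x) (h1.mul_left y)
          _ = 1 := this
      have := Int.eq_one_of_dvd_one (by positivity) hdvd
      exact_mod_cast this
    have hge : m ≤ Q₂.c := hmin _ ⟨hcpos, _, _, hprim, hc₂.symm⟩
    -- contradiction with disc > 0
    have hd : Q₂.disc = Q₂.b ^ 2 - 4 * Q₂.a * Q₂.c := rfl
    have : Q.disc < 0 := by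
      rw [← hdisc₂, hd]
      nlinarith [hb₂'.1, hb₂'.2, hge, ha₂, ha₁, hm0]
    omega

end BQFAux

namespace BQFAux

open NumberField Polynomial

variable {D : ℤ} {K : Type} [Field K] [NumberField K] {sqD : K}

/-- no rational square root -/
theorem sqD_irrational (hDns : ¬ IsSquare D) (hsqD : sqD ^ 2 = (D : K)) :
    ∀ q : ℚ, (q : K) ≠ sqD := by
  intro q hq
  have hq2 : ((q ^ 2 : ℚ) : K) = ((D : ℚ) : K) := by
    push_cast
    rw [hq, hsqD]
  have hq2' : q ^ 2 = (D : ℚ) := by exact_mod_cast hq2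
  have hint : IsIntegral ℤ q := by
    refine ⟨X ^ 2 - C D, ?_, ?_⟩
    · apply Polynomial.monic_X_pow_sub_C
      norm_num
    · simp only [eval₂_sub, eval₂_X_pow, eval₂_C]
      have : (algebraMap ℤ ℚ) D = (D : ℚ) := by simp
      rw [this, ← hq2']
      ring
  obtain ⟨n, hn⟩ := IsIntegrallyClosed.isIntegral_iff.mp hint
  apply hDns
  refine ⟨n, ?_⟩
  have hnq : (n : ℚ) = q := by rw [← hn]; simp
  have : ((n * n : ℤ) : ℚ) = ((D : ℤ) : ℚ) := by
    push_cast
    rw [hnq]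
    nlinarith [hq2']
  exact_mod_cast this.symm

theorem sqD_ne_int (hDns : ¬ IsSquare D) (hsqD : sqD ^ 2 = (D : K)) :
    ∀ n : ℤ, (n : K) ≠ sqD := by
  intro n hn
  exact sqD_irrational hDns hsqD n (by exact_mod_cast hn)

theorem sqD_ne_zero (hD : 0 < D) (hsqD : sqD ^ 2 = (D : K)) : sqD ≠ 0 := by
  intro h
  rw [h] at hsqD
  have : (D : K) = 0 := by simpa using hsqD.symm
  have : (D : ℤ) = 0 := by exact_mod_cast this
  omega

/-- the basis {1, sqD} of K over ℚ -/
noncomputable def sqDBasis (hDns : ¬ IsSquare D) (hsqD : sqD ^ 2 = (D : K)) (hD : 0 < D)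
    (hdeg : Module.finrank ℚ K = 2) : Module.Basis (Fin 2) ℚ K :=
  basisOfLinearIndependentOfCardEqFinrank
    (b := ![1, sqD])
    (by
      rw [linearIndependent_fin2]
      refine ⟨by simpa using sqD_ne_zero hD hsqD, ?_⟩
      intro q hq
      simp only [Matrix.cons_val_one, Matrix.head_cons, Matrix.cons_val_zero] at hq
      have hq0 : q ≠ 0 := by rintro rfl; rw [zero_smul] at hq; exact one_ne_zero hq.symm
      apply sqD_irrational hDns hsqD q⁻¹
      have h1 : (q : K) * sqD = 1 := by rw [← hq, Rat.smul_def]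
      have : (q⁻¹ : ℚ) = ((q : ℚ)⁻¹ : ℚ) := rfl
      rw [this]
      push_cast
      exact (eq_inv_of_mul_eq_one_right h1).symm)
    (by simp [hdeg])

theorem trace_one' (hdeg : Module.finrank ℚ K = 2) : Algebra.trace ℚ K 1 = 2 := by
  have := Algebra.trace_algebraMap (R := ℚ) (S := K) 1
  rw [map_one] at this
  rw [this, hdeg]
  norm_num

theorem trace_sqD (hDns : ¬ IsSquare D) (hsqD : sqD ^ 2 = (D : K)) (hD : 0 < D)
    (hdeg : Module.finrank ℚ K = 2) : Algebra.trace ℚ K sqD = 0 := by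
  set B := sqDBasis hDns hsqD hD hdeg with hB
  have hBc : ⇑B = ![1, sqD] := coe_basisOfLinearIndependentOfCardEqFinrank _ _
  have hB0 : B 0 = 1 := by rw [hBc]; rfl
  have hB1 : B 1 = sqD := by rw [hBc]; rfl
  rw [Algebra.trace_eq_matrix_trace B, Matrix.trace, Fin.sum_univ_two]
  have h00 : (Algebra.leftMulMatrix B) sqD 0 0 = 0 := by
    rw [Algebra.leftMulMatrix_eq_repr_mul, hB0, mul_one, ← hB1, B.repr_self]
    simp
  have h11 : (Algebra.leftMulMatrix B) sqD 1 1 = 0 := by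
    rw [Algebra.leftMulMatrix_eq_repr_mul, hB1]
    have : sqD * sqD = (D : ℚ) • B 0 := by
      rw [hB0, Rat.smul_def]
      push_cast
      rw [← hsqD]; ring
    rw [this, map_smul, B.repr_self]
    simp
  simp [Matrix.diag, h00, h11]

end BQFAux

namespace BQFAux2

open NumberField Polynomial BQFAux Matrix

variable {D : ℤ} {K : Type} [Field K] [NumberField K] {sqD : K}

theorem trace_theta (hDns : ¬ IsSquare D) (hsqD : sqD ^ 2 = (D : K)) (hD : 0 < D)
    (hdeg : Module.finrank ℚ K = 2) :
    Algebra.trace ℚ K (((D : K) + sqD)/2) = (D : ℚ) := by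
  have hθ : ((D : K) + sqD)/2 = ((D : ℚ)/2) • (1 : K) + ((1 : ℚ)/2) • sqD := by
    rw [Rat.smul_def, Rat.smul_def]; push_cast; ring
  rw [hθ, map_add, _root_.map_smul, _root_.map_smul, trace_one' hdeg, trace_sqD hDns hsqD hD hdeg]
  simp

theorem trace_theta_sq (hDns : ¬ IsSquare D) (hsqD : sqD ^ 2 = (D : K)) (hD : 0 < D)
    (hdeg : Module.finrank ℚ K = 2) :
    Algebra.trace ℚ K ((((D : K) + sqD)/2) * (((D : K) + sqD)/2)) = ((D^2 + D : ℤ) : ℚ)/2 := by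
  have hθ : (((D : K) + sqD)/2) * (((D : K) + sqD)/2)
      = (((D^2 + D : ℤ) : ℚ)/4) • (1 : K) + (((D : ℚ))/2) • sqD := by
    rw [Rat.smul_def, Rat.smul_def]; push_cast
    linear_combination hsqD/4
  rw [hθ, map_add, _root_.map_smul, _root_.map_smul, trace_one' hdeg, trace_sqD hDns hsqD hD hdeg]
  rw [smul_eq_mul, smul_eq_mul]
  push_cast
  ring

theorem discr_one_theta (hDns : ¬ IsSquare D) (hsqD : sqD ^ 2 = (D : K)) (hD : 0 < D)
    (hdeg : Module.finrank ℚ K = 2) :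
    Algebra.discr ℚ ![(1 : K), ((D : K) + sqD)/2] = (D : ℚ) := by
  rw [Algebra.discr_def, Matrix.det_fin_two]
  simp only [Algebra.traceMatrix_apply, Algebra.traceForm_apply, Matrix.cons_val_zero,
    Matrix.cons_val_one, Matrix.head_cons, one_mul, mul_one]
  rw [trace_one' hdeg, trace_theta hDns hsqD hD hdeg, trace_theta_sq hDns hsqD hD hdeg]
  push_cast
  ring

theorem theta_integral (hD4 : D % 4 = 0 ∨ D % 4 = 1) (hsqD : sqD ^ 2 = (D : K)) :
    IsIntegral ℤ (((D : K) + sqD)/2) := by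
  obtain ⟨mm, hmm⟩ : ∃ mm : ℤ, D ^ 2 - D = 4 * mm := by
    rcases hD4 with h | h
    · have h4 : (4:ℤ) ∣ D := by omega
      obtain ⟨k, rfl⟩ := h4
      exact ⟨4 * k ^ 2 - k, by ring⟩
    · have h4 : (4:ℤ) ∣ (D - 1) := by omega
      obtain ⟨k, hk⟩ := h4
      exact ⟨D * k, by linear_combination D * hk⟩
  refine ⟨X ^ 2 - C D * X + C mm, ?_, ?_⟩
  · have heq : X ^ 2 - C D * X + C mm = X ^ 2 + (C (-D) * X + C mm) := by
      simp only [map_neg]; ring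
    rw [heq]
    apply Polynomial.monic_X_pow_add
    refine lt_of_le_of_lt (Polynomial.degree_linear_le) ?_
    decide
  · have hmmK : ((D : K)) ^ 2 - (D : K) = 4 * (mm : K) := by exact_mod_cast hmm
    simp only [eval₂_add, eval₂_sub, eval₂_mul, eval₂_X_pow, eval₂_X, eval₂_C]
    have hDK : (algebraMap ℤ K) D = (D : K) := by simp
    have hmK : (algebraMap ℤ K) mm = (mm : K) := by simp
    rw [hDK, hmK]
    linear_combination hsqD/4 - hmmK/4

theorem ringOfIntegers_le_span
    (hD : 0 < D) (hDns : ¬ IsSquare D) (hD4 : D % 4 = 0 ∨ D % 4 = 1)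
    (hdeg : Module.finrank ℚ K = 2) (hdisc : NumberField.discr K = D)
    (hsqD : sqD ^ 2 = (D : K)) :
    ∀ r : 𝓞 K, (algebraMap (𝓞 K) K r) ∈
      Submodule.span ℤ ({1, ((D : K) + sqD)/2} : Set K) := by
  intro r
  classical
  set θ : K := ((D : K) + sqD)/2 with hθdef
  have hθint : IsIntegral ℤ θ := theta_integral hD4 hsqD
  set θo : 𝓞 K := ⟨θ, hθint⟩ with hθodef
  have hθo : algebraMap (𝓞 K) K θo = θ := rfl
  set ι := Module.Free.ChooseBasisIndex ℤ (𝓞 K) with hι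
  set b₀ : Module.Basis ι ℤ (𝓞 K) := RingOfIntegers.basis K with hb₀
  have hcard : Fintype.card ι = 2 := by
    have : Fintype.card (Module.Free.ChooseBasisIndex ℤ (𝓞 K)) = 2 := by
      rw [← Module.finrank_eq_card_chooseBasisIndex, RingOfIntegers.rank, hdeg]
    exact this
  set eqv : ι ≃ Fin 2 := Fintype.equivFinOfCardEq hcard with heqv
  set v : ι → 𝓞 K := fun i => ![1, θo] (eqv i) with hvdef
  set P : Matrix ι ι ℤ := Matrix.of fun i j => b₀.repr (v i) j with hP
  have hv : ∀ i, v i = ∑ j, P i j • b₀ j := fun i => (b₀.sum_repr (v i)).symm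
  have hvK : ∀ i, algebraMap (𝓞 K) K (v i) = ![1, θ] (eqv i) := by
    intro i
    have h2 : ∀ t : Fin 2, algebraMap (𝓞 K) K (![1, θo] t) = ![1, θ] t := by
      intro t; fin_cases t <;> simp [hθo]
    exact h2 (eqv i)
  have hdiscr1 : Algebra.discr ℚ (fun i => algebraMap (𝓞 K) K (v i))
      = Algebra.discr ℚ ![(1 : K), θ] := by
    rw [Algebra.discr_def, Algebra.discr_def]
    have hmat : Algebra.traceMatrix ℚ (fun i => algebraMap (𝓞 K) K (v i))
        = (Algebra.traceMatrix ℚ ![(1 : K), θ]).submatrix eqv eqv := by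
      ext i j
      simp only [Algebra.traceMatrix_apply, Matrix.submatrix_apply, hvK]
    rw [hmat, Matrix.det_submatrix_equiv_self]
  have hdiscr2 : Algebra.discr ℚ (fun i => algebraMap (𝓞 K) K (v i))
      = (P.det : ℚ) ^ 2 * (D : ℚ) := by
    have hfun : (fun i => algebraMap (𝓞 K) K (v i))
        = (P.map (Int.cast : ℤ → ℚ)).map (algebraMap ℚ K) *ᵥ ⇑(integralBasis K) := by
      funext i
      have : algebraMap (𝓞 K) K (v i) = ∑ j, P i j • algebraMap (𝓞 K) K (b₀ j) := by
        rw [hv i, map_sum]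
        exact Finset.sum_congr rfl fun j _ => map_zsmul _ _ _
      rw [this]
      simp only [Matrix.mulVec, dotProduct, Matrix.map_apply]
      refine Finset.sum_congr rfl fun j _ => ?_
      rw [integralBasis_apply, zsmul_eq_mul, map_intCast]
    rw [hfun, Algebra.discr_of_matrix_mulVec]
    congr 1
    · rw [show P.map (Int.cast : ℤ → ℚ) = (Int.castRingHom ℚ).mapMatrix P from rfl,
        ← RingHom.map_det]
      norm_num
    · rw [← coe_discr, hdisc]
  have hdet2 : P.det ^ 2 = 1 := by
    have h1 : (P.det : ℚ) ^ 2 * (D : ℚ) = (D : ℚ) := by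
      rw [← hdiscr2, hdiscr1, discr_one_theta hDns hsqD hD hdeg]
    have hDne : (D : ℚ) ≠ 0 := Int.cast_ne_zero.mpr (by omega)
    have h2 : (P.det : ℚ) ^ 2 = 1 :=
      mul_right_cancel₀ hDne (h1.trans (one_mul ((D : ℚ))).symm)
    exact_mod_cast h2
  set Qm : Matrix ι ι ℤ := P.det • P.adjugate with hQm
  have hQmP : Qm * P = 1 := by
    rw [hQm, Matrix.smul_mul, Matrix.adjugate_mul, smul_smul, ← pow_two, hdet2, one_smul]
  have hb0span : ∀ j, b₀ j = ∑ l, Qm j l • v l := by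
    intro j
    calc b₀ j = ∑ t, ((1 : Matrix ι ι ℤ) j t) • b₀ t := by
          simp [Matrix.one_apply, ite_smul, Finset.sum_ite_eq]
      _ = ∑ t, ((Qm * P) j t) • b₀ t := by rw [hQmP]
      _ = ∑ t, (∑ l, Qm j l * P l t) • b₀ t := by simp_rw [Matrix.mul_apply]
      _ = ∑ t, ∑ l, (Qm j l * P l t) • b₀ t := by simp_rw [Finset.sum_smul]
      _ = ∑ l, ∑ t, (Qm j l * P l t) • b₀ t := Finset.sum_comm
      _ = ∑ l, Qm j l • v l := by
          refine Finset.sum_congr rfl fun l _ => ?_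
          rw [hv l, Finset.smul_sum]
          exact Finset.sum_congr rfl fun t _ => (smul_smul _ _ _).symm
  have hrv : r ∈ Submodule.span ℤ (Set.range v) := by
    have hr : r = ∑ i, b₀.repr r i • b₀ i := (b₀.sum_repr r).symm
    rw [hr]
    refine Submodule.sum_mem _ fun i _ => Submodule.smul_mem _ _ ?_
    rw [hb0span i]
    exact Submodule.sum_mem _ fun l _ =>
      Submodule.smul_mem _ _ (Submodule.subset_span ⟨l, rfl⟩)
  have hmap := Submodule.apply_mem_span_image_of_mem_span
    ((Algebra.linearMap (𝓞 K) K).restrictScalars ℤ) hrv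
  have hsub : (⇑((Algebra.linearMap (𝓞 K) K).restrictScalars ℤ)) '' (Set.range v)
      ⊆ ({1, θ} : Set K) := by
    rintro x ⟨y, ⟨i, rfl⟩, rfl⟩
    simp only [LinearMap.coe_restrictScalars, Algebra.linearMap_apply]
    rw [hvK i]
    have h2 : ∀ t : Fin 2, ![(1:K), θ] t ∈ ({1, θ} : Set K) := by
      intro t; fin_cases t <;> simp
    exact h2 (eqv i)
  have := Submodule.span_mono hsub hmap
  simpa using this

end BQFAux2

namespace BQFAux2

open NumberField BQFAux Matrix

variable {D : ℤ} {K : Type} [Field K] [NumberField K] {sqD : K}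

/-- a ℤ-span of two elements stable under multiplication by θ is an 𝓞-module -/
theorem restrictScalars_span_pair
    (hOK : ∀ r : 𝓞 K, (algebraMap (𝓞 K) K r) ∈
      Submodule.span ℤ ({1, ((D : K) + sqD)/2} : Set K))
    (u w : K)
    (hu : (((D : K) + sqD)/2) * u ∈ Submodule.span ℤ ({u, w} : Set K))
    (hw : (((D : K) + sqD)/2) * w ∈ Submodule.span ℤ ({u, w} : Set K)) :
    Submodule.restrictScalars ℤ (Submodule.span (𝓞 K) ({u, w} : Set K))
      = Submodule.span ℤ ({u, w} : Set K) := by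
  set θ : K := ((D : K) + sqD)/2 with hθ
  have hmulθ : ∀ y ∈ Submodule.span ℤ ({u, w} : Set K),
      θ * y ∈ Submodule.span ℤ ({u, w} : Set K) := by
    intro y hy
    obtain ⟨p, q, hpq⟩ := Submodule.mem_span_pair.mp hy
    rw [← hpq, mul_add, mul_comm θ (p • u), mul_comm θ (q • w), smul_mul_assoc,
      smul_mul_assoc, mul_comm u θ, mul_comm w θ]
    exact Submodule.add_mem _ (Submodule.smul_mem _ _ hu) (Submodule.smul_mem _ _ hw)
  apply le_antisymm
  · intro x hx
    have hx' : x ∈ Submodule.span (𝓞 K) ({u, w} : Set K) := hx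
    clear hx
    induction hx' using Submodule.span_induction with
    | mem y hy => exact Submodule.subset_span hy
    | zero => exact Submodule.zero_mem _
    | add y z _ _ hy hz => exact Submodule.add_mem _ hy hz
    | smul r y _ hy =>
        obtain ⟨p, q, hpq⟩ := Submodule.mem_span_pair.mp (hOK r)
        have hry : r • y = p • y + q • (θ * y) := by
          rw [Algebra.smul_def, ← hpq]
          push_cast
          rw [zsmul_eq_mul, zsmul_eq_mul, zsmul_eq_mul, zsmul_eq_mul]
          ring
        rw [hry]
        exact Submodule.add_mem _ (Submodule.smul_mem _ _ hy)
          (Submodule.smul_mem _ _ (hmulθ y hy))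
  · rw [Submodule.span_le]
    rintro x (rfl | rfl)
    · exact Submodule.subset_span (Set.mem_insert _ _)
    · exact Submodule.subset_span (Set.mem_insert_of_mem _ rfl)

/-- the fractional ideal spanned by two elements -/
noncomputable def pairIdeal (u w : K) : FractionalIdeal (𝓞 K)⁰ K :=
  ⟨Submodule.span (𝓞 K) ({u, w} : Set K),
    FractionalIdeal.isFractional_of_fg (Submodule.fg_span (Set.toFinite _))⟩

theorem coe_pairIdeal (u w : K) :
    (pairIdeal u w : Submodule (𝓞 K) K) = Submodule.span (𝓞 K) ({u, w} : Set K) := rfl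

theorem pairIdeal_ne_zero {u : K} (hu : u ≠ 0) (w : K) : pairIdeal u w ≠ 0 := by
  intro h
  have hmem : u ∈ (pairIdeal u w : Submodule (𝓞 K) K) :=
    Submodule.subset_span (Set.mem_insert _ _)
  rw [h] at hmem
  rw [FractionalIdeal.coe_zero] at hmem
  exact hu (Submodule.mem_bot _ |>.mp hmem)

/-- the unit attached to a nonzero fractional ideal -/
noncomputable def idealUnit (I : FractionalIdeal (𝓞 K)⁰ K) (h : I ≠ 0) :
    (FractionalIdeal (𝓞 K)⁰ K)ˣ :=
  Units.mkOfMulEqOne I I⁻¹ (mul_inv_cancel₀ h)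

theorem coe_idealUnit (I : FractionalIdeal (𝓞 K)⁰ K) (h : I ≠ 0) :
    ((idealUnit I h : (FractionalIdeal (𝓞 K)⁰ K)ˣ) : FractionalIdeal (𝓞 K)⁰ K) = I := rfl

/-- the unit attached to a nonzero element -/
noncomputable def elemUnit {x : K} (hx : x ≠ 0) : (FractionalIdeal (𝓞 K)⁰ K)ˣ :=
  Units.mkOfMulEqOne (FractionalIdeal.spanSingleton (𝓞 K)⁰ x)
    (FractionalIdeal.spanSingleton (𝓞 K)⁰ x⁻¹)
    (by rw [FractionalIdeal.spanSingleton_mul_spanSingleton, mul_inv_cancel₀ hx,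
      FractionalIdeal.spanSingleton_one])

theorem coe_elemUnit {x : K} (hx : x ≠ 0) :
    ((elemUnit hx : (FractionalIdeal (𝓞 K)⁰ K)ˣ) : FractionalIdeal (𝓞 K)⁰ K)
      = FractionalIdeal.spanSingleton (𝓞 K)⁰ x := rfl

theorem spanSingleton_mul_pairIdeal (x u w : K) :
    FractionalIdeal.spanSingleton (𝓞 K)⁰ x * pairIdeal u w = pairIdeal (x * u) (x * w) := by
  apply FractionalIdeal.coeToSubmodule_injective
  show ((FractionalIdeal.spanSingleton (𝓞 K)⁰ x * pairIdeal u w :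
      FractionalIdeal (𝓞 K)⁰ K) : Submodule (𝓞 K) K)
    = ((pairIdeal (x * u) (x * w) : FractionalIdeal (𝓞 K)⁰ K) : Submodule (𝓞 K) K)
  rw [FractionalIdeal.coe_mul, FractionalIdeal.coe_spanSingleton, coe_pairIdeal, coe_pairIdeal,
    Submodule.span_mul_span]
  congr 1
  rw [Set.singleton_mul, Set.image_pair]

end BQFAux2

namespace BQFAux2

open NumberField BQFAux

variable {D : ℤ} {K : Type} [Field K] [NumberField K] {sqD : K}

/-- θ-stability of the lattice of a form of discriminant D -/
theorem theta_stab (hsqD : sqD ^ 2 = (D : K)) (Q : BQF) (hQ : Q.disc = D) :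
    (((D : K) + sqD)/2) * ((Q.a : ℤ) : K) ∈
        Submodule.span ℤ ({((Q.a : ℤ) : K), (-(Q.b : K) + sqD)/2} : Set K) ∧
    (((D : K) + sqD)/2) * ((-(Q.b : K) + sqD)/2) ∈
        Submodule.span ℤ ({((Q.a : ℤ) : K), (-(Q.b : K) + sqD)/2} : Set K) := by
  have hdisc : Q.b ^ 2 - 4 * Q.a * Q.c = D := hQ
  obtain ⟨k, hk⟩ : Even (Q.b * (Q.b + 1)) := Int.even_mul_succ_self Q.b
  set s : ℤ := k - 2 * Q.a * Q.c with hsdef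
  have hs : D + Q.b = 2 * s := by rw [hsdef]; linear_combination hk - hdisc
  set t : ℤ := s - Q.b with htdef
  have ht : D - Q.b = 2 * t := by rw [htdef]; omega
  have hsK : (D : K) + (Q.b : K) = 2 * (s : K) := by exact_mod_cast hs
  have htK : (D : K) - (Q.b : K) = 2 * (t : K) := by exact_mod_cast ht
  have hdK : (Q.b : K) ^ 2 - 4 * (Q.a : K) * (Q.c : K) = (D : K) := by exact_mod_cast hdisc
  constructor
  · have hid : (((D : K) + sqD)/2) * ((Q.a : ℤ) : K)
        = (s : ℤ) • (((Q.a : ℤ) : K)) + (Q.a : ℤ) • ((-(Q.b : K) + sqD)/2) := by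
      rw [zsmul_eq_mul, zsmul_eq_mul]
      push_cast
      linear_combination ((Q.a : K)/2) * hsK
    rw [hid]
    exact Submodule.add_mem _
      (Submodule.smul_mem _ _ (Submodule.subset_span (Set.mem_insert _ _)))
      (Submodule.smul_mem _ _ (Submodule.subset_span (Set.mem_insert_of_mem _ rfl)))
  · have hid : (((D : K) + sqD)/2) * ((-(Q.b : K) + sqD)/2)
        = (-Q.c : ℤ) • (((Q.a : ℤ) : K)) + (t : ℤ) • ((-(Q.b : K) + sqD)/2) := by
      rw [zsmul_eq_mul, zsmul_eq_mul]
      push_cast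
      linear_combination (hsqD + sqD * htK - hdK)/4 - ((Q.b:K)/4)*htK
    rw [hid]
    exact Submodule.add_mem _
      (Submodule.smul_mem _ _ (Submodule.subset_span (Set.mem_insert _ _)))
      (Submodule.smul_mem _ _ (Submodule.subset_span (Set.mem_insert_of_mem _ rfl)))

/-- the lattice of a form with positive leading coefficient -/
theorem lattice_eq (hD : 0 < D) (hDns : ¬ IsSquare D) (hD4 : D % 4 = 0 ∨ D % 4 = 1)
    (hdeg : Module.finrank ℚ K = 2) (hdisc : NumberField.discr K = D)
    (hsqD : sqD ^ 2 = (D : K)) (Q : BQF) (hQ : Q.disc = D) (ha : 0 < Q.a) :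
    Submodule.restrictScalars ℤ
        ((pairIdeal ((Q.a : ℤ) : K) ((-(Q.b : K) + sqD)/2) : FractionalIdeal (𝓞 K)⁰ K) :
          Submodule (𝓞 K) K)
      = Submodule.span ℤ ({((Q.a : ℤ) : K), ((Q.a : ℤ) : K) * BQF.tau sqD Q} : Set K) := by
  have htau : ((Q.a : ℤ) : K) * BQF.tau sqD Q = (-(Q.b : K) + sqD)/2 := by
    rw [BQF.tau, if_pos ha]
    have haK : ((Q.a : ℤ) : K) ≠ 0 := Int.cast_ne_zero.mpr (by omega)
    push_cast
    field_simp
  rw [htau, coe_pairIdeal]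
  exact restrictScalars_span_pair (ringOfIntegers_le_span hD hDns hD4 hdeg hdisc hsqD)
    _ _ (theta_stab hsqD Q hQ).1 (theta_stab hsqD Q hQ).2

end BQFAux2


/-- The equivalence classes of binary quadratic forms of discriminant `D` under the
`SL₂(ℤ)`-action. -/
def FormClass (D : ℤ) : Type :=
  Quot (fun Q Q' : {Q : BQF // Q.disc = D} => BQF.Equiv Q.1 Q'.1)

/-- The class of a form of discriminant `D`. -/
def FormClass.mk {D : ℤ} (Q : BQF) (hQ : Q.disc = D) : FormClass D :=
  Quot.mk _ ⟨Q, hQ⟩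

/-- An element of a number field is totally positive if it is positive under every real
embedding. -/
def IsTotallyPositiveElem {K : Type*} [Field K] (α : K) : Prop :=
  ∀ φ : K →+* ℝ, 0 < φ α

/-- The subgroup of invertible fractional ideals generated by the principal fractional ideals
with a totally positive generator. -/
noncomputable def narrowPrincipalSubgroup (K : Type*) [Field K] [NumberField K] :
    Subgroup (FractionalIdeal (𝓞 K)⁰ K)ˣ :=
  Subgroup.closure
    {I : (FractionalIdeal (𝓞 K)⁰ K)ˣ | ∃ α : K, IsTotallyPositiveElem α ∧
      (I : FractionalIdeal (𝓞 K)⁰ K) = FractionalIdeal.spanSingleton (𝓞 K)⁰ α}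

/-- The narrow class group of a number field: invertible fractional ideals modulo principal
fractional ideals with totally positive generator. -/
abbrev NarrowClassGroup (K : Type*) [Field K] [NumberField K] :=
  (FractionalIdeal (𝓞 K)⁰ K)ˣ ⧸ narrowPrincipalSubgroup K

namespace BQFAux2

open NumberField BQFAux

variable {D : ℤ} {K : Type} [Field K] [NumberField K] {sqD : K}

theorem pairIdeal_comm (u w : K) : pairIdeal u w = pairIdeal w u := by
  apply FractionalIdeal.coeToSubmodule_injective
  show Submodule.span (𝓞 K) ({u, w} : Set K) = Submodule.span (𝓞 K) ({w, u} : Set K)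
  rw [Set.pair_comm]

theorem key_step
    (hD : 0 < D) (hDns : ¬ IsSquare D) (hD4 : D % 4 = 0 ∨ D % 4 = 1)
    (hdeg : Module.finrank ℚ K = 2) (hdisc : NumberField.discr K = D)
    (hsqD : sqD ^ 2 = (D : K))
    (e : FormClass D ≃ NarrowClassGroup K)
    (hcorr : ∀ (Q : BQF) (hQ : Q.disc = D), 0 < Q.a →
        ∀ I : (FractionalIdeal (𝓞 K)⁰ K)ˣ,
          Submodule.restrictScalars ℤ
              ((I : FractionalIdeal (𝓞 K)⁰ K) : Submodule (𝓞 K) K) =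
            Submodule.span ℤ ({((Q.a : ℤ) : K), ((Q.a : ℤ) : K) * BQF.tau sqD Q} : Set K) →
          e (FormClass.mk Q hQ) = QuotientGroup.mk I)
    (Q : BQF) (hQ : Q.disc = D) (ha : 0 < Q.a) (hc : Q.c < 0)
    (hQ' : (BQF.invol Q).disc = D)
    (J : (FractionalIdeal (𝓞 K)⁰ K)ˣ)
    (hJ : (J : FractionalIdeal (𝓞 K)⁰ K) = FractionalIdeal.spanSingleton (𝓞 K)⁰ sqD) :
    e (FormClass.mk (BQF.invol Q) hQ') = e (FormClass.mk Q hQ) * QuotientGroup.mk J := by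
  have hdisc2 : Q.b ^ 2 - 4 * Q.a * Q.c = D := hQ
  have hsqD0 : sqD ≠ 0 := sqD_ne_zero hD hsqD
  set u : K := ((Q.a : ℤ) : K) with hu
  set w : K := (-(Q.b : K) + sqD)/2 with hw
  set u' : K := (((BQF.invol Q).a : ℤ) : K) with hu'
  set w' : K := (-(((BQF.invol Q).b : ℤ) : K) + sqD)/2 with hw'
  have hia : (BQF.invol Q).a = -Q.c := rfl
  have hib : (BQF.invol Q).b = -Q.b := rfl
  have ha' : 0 < (BQF.invol Q).a := by rw [hia]; omega
  have hu0 : u ≠ 0 := Int.cast_ne_zero.mpr (by omega)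
  have hu'0 : u' ≠ 0 := Int.cast_ne_zero.mpr (by rw [hia]; omega)
  have hw'K : w' = ((Q.b : K) + sqD)/2 := by rw [hw', hib]; push_cast; ring
  have hw'0 : w' ≠ 0 := by
    rw [hw'K]
    intro h
    apply sqD_ne_int hDns hsqD (-Q.b)
    have h2 : (Q.b : K) + sqD = 0 := by
      linear_combination 2 * h
    push_cast
    linear_combination -h2
  -- units
  set UI := idealUnit (pairIdeal u w) (pairIdeal_ne_zero hu0 w) with hUI
  set UI' := idealUnit (pairIdeal u' w') (pairIdeal_ne_zero hu'0 w') with hUI'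
  have h1 : e (FormClass.mk Q hQ) = QuotientGroup.mk UI := by
    refine hcorr Q hQ ha UI ?_
    rw [hUI, coe_idealUnit]
    exact lattice_eq hD hDns hD4 hdeg hdisc hsqD Q hQ ha
  have h2 : e (FormClass.mk (BQF.invol Q) hQ') = QuotientGroup.mk UI' := by
    refine hcorr (BQF.invol Q) hQ' ha' UI' ?_
    rw [hUI', coe_idealUnit]
    exact lattice_eq hD hDns hD4 hdeg hdisc hsqD (BQF.invol Q) hQ' ha'
  -- the multiplier
  set lam : K := (w' / u) / sqD with hlam
  have hlam0 : lam ≠ 0 := div_ne_zero (div_ne_zero hw'0 hu0) hsqD0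
  have hsl : sqD * lam = w' / u := mul_div_cancel₀ _ hsqD0
  have hμu : (w' / u) * u = w' := div_mul_cancel₀ _ hu0
  have hww : w' * w = u' * u := by
    rw [hw'K, hw, hu', hu, hia]
    push_cast
    linear_combination (hsqD - (by exact_mod_cast hdisc2 : ((Q.b : K))^2
      - 4 * (Q.a : K) * (Q.c : K) = (D : K)))/4
  have hμw : (w' / u) * w = u' := by
    rw [div_mul_eq_mul_div, hww]
    exact mul_div_cancel_right₀ _ hu0
  have hIJ : FractionalIdeal.spanSingleton (𝓞 K)⁰ (w' / u) * pairIdeal u w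
      = pairIdeal u' w' := by
    rw [spanSingleton_mul_pairIdeal, hμu, hμw, pairIdeal_comm]
  have hunits : UI' = UI * J * elemUnit hlam0 := by
    apply Units.ext
    show (pairIdeal u' w' : FractionalIdeal (𝓞 K)⁰ K)
      = ((UI * J * elemUnit hlam0 : (FractionalIdeal (𝓞 K)⁰ K)ˣ) : FractionalIdeal (𝓞 K)⁰ K)
    rw [Units.val_mul, Units.val_mul, coe_idealUnit, coe_elemUnit, hJ, mul_assoc,
      FractionalIdeal.spanSingleton_mul_spanSingleton, hsl, mul_comm, hIJ]
  -- total positivity of lam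
  have htpos : IsTotallyPositiveElem lam := by
    intro φ
    have hs2 : (φ sqD) ^ 2 = (D : ℝ) := by rw [← map_pow, hsqD, map_intCast]
    have hDR : (0 : ℝ) < (D : ℝ) := by exact_mod_cast hD
    have hs0 : φ sqD ≠ 0 := by
      intro h
      rw [h] at hs2
      have hd0 : ((D : ℤ) : ℝ) = 0 := by rw [← hs2]; ring
      have : (D : ℤ) = 0 := by exact_mod_cast hd0
      omega
    have hbZ : Q.b ^ 2 < D := by nlinarith [hdisc2, ha, hc]
    have hbR : ((Q.b : ℝ)) ^ 2 < (D : ℝ) := by exact_mod_cast hbZ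
    have haR : (0 : ℝ) < (Q.a : ℝ) := by exact_mod_cast ha
    have hcalc : φ lam = (((Q.b : ℝ) + φ sqD)/2) / ((Q.a : ℝ) * φ sqD) := by
      rw [hlam, hw'K, hu]
      rw [map_div₀, map_div₀, map_div₀, map_add, map_intCast, map_intCast, map_ofNat]
      ring
    rw [hcalc]
    rcases hs0.lt_or_gt with hneg | hpos
    · apply div_pos_of_neg_of_neg
      · nlinarith [hs2, hbR, hneg]
      · exact mul_neg_of_pos_of_neg haR hneg
    · apply div_pos
      · nlinarith [hs2, hbR, hpos]
      · positivity
  have hmem : elemUnit hlam0 ∈ narrowPrincipalSubgroup K :=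
    Subgroup.subset_closure ⟨lam, htpos, rfl⟩
  rw [h1, h2, hunits, QuotientGroup.mk_mul, QuotientGroup.mk_mul,
    (QuotientGroup.eq_one_iff _).mpr hmem]
  show (QuotientGroup.mk UI : NarrowClassGroup K) * QuotientGroup.mk J * 1
      = QuotientGroup.mk UI * QuotientGroup.mk J
  exact mul_one ((QuotientGroup.mk UI : NarrowClassGroup K) * QuotientGroup.mk J)

end BQFAux2

/-- **The involution `⟨a,b,c⟩ ↦ ⟨-c,-b,-a⟩` corresponds to multiplication by the class of
`(√D)` on the narrow class group.**

The involution preserves the discriminant and descends to `SL₂(ℤ)`-classes; moreover, under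
any bijection `e` between `SL₂(ℤ)`-classes of forms of discriminant `D` and the narrow class
group realizing the classical correspondence (sending a form with `a > 0` to the class of
`aℤ + aτℤ`, where `τ` is the root of `Q(x,1)` with `τ > τ'`), the involution corresponds to
multiplication by the narrow class of the principal ideal `(√D)`. -/
theorem invol_corresponds_to_mul_sqrtD
    (D : ℤ) (hD : 0 < D) (hDns : ¬ IsSquare D) (hD4 : D % 4 = 0 ∨ D % 4 = 1)
    (K : Type) [Field K] [NumberField K]
    (hdeg : Module.finrank ℚ K = 2) (hdisc : NumberField.discr K = D)
    (sqD : K) (hsqD : sqD ^ 2 = (D : K))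
    (ρ : K →+* ℝ) (hρ : 0 < ρ sqD) :
    (∀ Q : BQF, (BQF.invol Q).disc = Q.disc) ∧
    (∀ Q Q' : BQF, BQF.Equiv Q Q' → BQF.Equiv (BQF.invol Q) (BQF.invol Q')) ∧
    (∀ e : FormClass D ≃ NarrowClassGroup K,
      -- `e` realizes the classical correspondence:
      (∀ (Q : BQF) (hQ : Q.disc = D), 0 < Q.a →
        ∀ I : (FractionalIdeal (𝓞 K)⁰ K)ˣ,
          Submodule.restrictScalars ℤ
              ((I : FractionalIdeal (𝓞 K)⁰ K) : Submodule (𝓞 K) K) =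
            Submodule.span ℤ ({((Q.a : ℤ) : K), ((Q.a : ℤ) : K) * BQF.tau sqD Q} : Set K) →
          e (FormClass.mk Q hQ) = QuotientGroup.mk I) →
      -- then the involution corresponds to multiplication by the class of `(√D)`:
      ∀ (Q : BQF) (hQ : Q.disc = D) (J : (FractionalIdeal (𝓞 K)⁰ K)ˣ),
        (J : FractionalIdeal (𝓞 K)⁰ K) = FractionalIdeal.spanSingleton (𝓞 K)⁰ sqD →
        e (FormClass.mk (BQF.invol Q) ((BQF.invol_disc Q).trans hQ)) =
          e (FormClass.mk Q hQ) * QuotientGroup.mk J) := by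
  refine ⟨BQF.invol_disc, fun Q Q' h => BQFAux.invol_equiv h, ?_⟩
  intro e hcorr Q hQ J hJ
  have hDQ : 0 < Q.disc := by rw [hQ]; exact hD
  have hDnsQ : ¬ IsSquare Q.disc := by rw [hQ]; exact hDns
  obtain ⟨Q₂, hequiv, ha₂, hc₂⟩ := BQFAux.exists_reduced Q hDQ hDnsQ
  have hQ₂ : Q₂.disc = D := by
    obtain ⟨g, hg⟩ := hequiv
    rw [← hg, BQFAux.disc_SLAct]
    exact hQ
  have hQ₂' : (BQF.invol Q₂).disc = D := (BQF.invol_disc Q₂).trans hQ₂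
  have hmk1 : FormClass.mk Q hQ = FormClass.mk Q₂ hQ₂ := Quot.sound hequiv
  have hmk2 : FormClass.mk (BQF.invol Q) ((BQF.invol_disc Q).trans hQ)
      = FormClass.mk (BQF.invol Q₂) hQ₂' := Quot.sound (BQFAux.invol_equiv hequiv)
  rw [hmk1, hmk2]
  exact BQFAux2.key_step hD hDns hD4 hdeg hdisc hsqD e hcorr Q₂ hQ₂ ha₂ hc₂ hQ₂' J hJ
end

section
/- Let D > 0 be a non-square integer congruent to 0 or 1 modulo 4. Then every integral binary quadratic form of discriminant D is SL₂(ℤ)-equivalent to at least one reduced form, and the set of reduced forms of discriminant D is finite; consequently, any given form of discriminant D is equivalent to at least one and at most finitely many reduced forms. -/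
namespace BQF

/-- An indefinite form of non-square discriminant `D > 0` is reduced if
`|√D - 2|a|| < b < √D`. -/
noncomputable def IsReduced (Q : BQF) : Prop :=
  abs (Real.sqrt (Q.disc : ℝ) - 2 * abs (Q.a : ℝ)) < (Q.b : ℝ) ∧ (Q.b : ℝ) < Real.sqrt (Q.disc : ℝ)

lemma transform_disc (Q : BQF) (g : Matrix (Fin 2) (Fin 2) ℤ) :
    (Q.transform g).disc = (g 0 0 * g 1 1 - g 0 1 * g 1 0)^2 * Q.disc := by
  simp only [transform, disc, eval]; ring

lemma SLAct_disc (g : Matrix.SpecialLinearGroup (Fin 2) ℤ) (Q : BQF) :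
    (SLAct g Q).disc = Q.disc := by
  have h := g.property
  rw [Matrix.det_fin_two] at h
  rw [SLAct, transform_disc, h]; ring

lemma transform_one (Q : BQF) : Q.transform 1 = Q := by
  simp [transform, eval, Matrix.one_apply]

lemma transform_mul (Q : BQF) (g h : Matrix (Fin 2) (Fin 2) ℤ) :
    (Q.transform g).transform h = Q.transform (g * h) := by
  simp only [transform, eval, Matrix.mul_apply, Fin.sum_univ_two, mk.injEq]
  refine ⟨by ring, by ring, by ring⟩

lemma equiv_refl (Q : BQF) : Equiv Q Q := ⟨1, by simp [SLAct, transform_one]⟩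

lemma equiv_trans {Q Q' Q'' : BQF} (h : Equiv Q Q') (h' : Equiv Q' Q'') : Equiv Q Q'' := by
  obtain ⟨g, rfl⟩ := h; obtain ⟨g', rfl⟩ := h'
  exact ⟨g * g', by rw [SLAct, SLAct, SLAct, transform_mul, ← Matrix.SpecialLinearGroup.coe_mul]⟩

lemma equiv_disc {Q Q' : BQF} (h : Equiv Q Q') : Q'.disc = Q.disc := by
  obtain ⟨g, rfl⟩ := h; exact SLAct_disc g Q

lemma equiv_T (Q : BQF) (n : ℤ) :
    Equiv Q ⟨Q.a, Q.b + 2*Q.a*n, Q.a*n^2 + Q.b*n + Q.c⟩ := by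
  refine ⟨⟨!![1, n; 0, 1], by simp [Matrix.det_fin_two_of]⟩, ?_⟩
  simp only [SLAct, transform, eval, Matrix.of_apply, Matrix.cons_val', Matrix.cons_val_zero,
    Matrix.cons_val_one, Matrix.head_cons, Matrix.head_fin_const, Matrix.empty_val',
    Matrix.cons_val_fin_one, mk.injEq]
  refine ⟨by ring, by ring, by ring⟩

lemma equiv_S (Q : BQF) : Equiv Q ⟨Q.c, -Q.b, Q.a⟩ := by
  refine ⟨⟨!![0, -1; 1, 0], by simp [Matrix.det_fin_two_of]⟩, ?_⟩
  simp only [SLAct, transform, eval, Matrix.of_apply, Matrix.cons_val', Matrix.cons_val_zero,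
    Matrix.cons_val_one, Matrix.head_cons, Matrix.head_fin_const, Matrix.empty_val',
    Matrix.cons_val_fin_one, mk.injEq]
  refine ⟨by ring, by ring, by ring⟩

end BQF

lemma exists_translate (a b L : ℤ) (ha : a ≠ 0) :
    ∃ n : ℤ, L < b + 2*a*n ∧ b + 2*a*n ≤ L + 2* |a| := by
  set d : ℤ := 2* |a| with hd
  have hdpos : 0 < d := by positivity
  set q : ℤ := (L + d - b) / d with hq
  have hmod := Int.mul_ediv_add_emod (L + d - b) d
  have hr0 : 0 ≤ (L + d - b) % d := Int.emod_nonneg _ (by omega)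
  have hr1 : (L + d - b) % d < d := Int.emod_lt_of_pos _ hdpos
  have key : L < b + d*q ∧ b + d*q ≤ L + d := by constructor <;> linarith
  rcases abs_choice a with h | h
  · exact ⟨q, by rw [show 2*a*q = d*q by rw [hd, h]]; exact key⟩
  · exact ⟨-q, by rw [show 2*a*(-q) = d*q by rw [hd, h]; ring]; exact key⟩

set_option maxHeartbeats 1000000 in
/-- **Reduction theory of indefinite binary quadratic forms.**
For a non-square discriminant `D > 0`, every form of discriminant `D` is `SL₂(ℤ)`-equivalent
to at least one reduced form, the set of reduced forms of discriminant `D` is finite, and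
consequently every form of discriminant `D` is equivalent to at least one and at most finitely
many reduced forms. -/
theorem indefinite_form_reduction
    (D : ℤ) (hD : 0 < D) (hDns : ¬ IsSquare D) (hD4 : D % 4 = 0 ∨ D % 4 = 1) :
    (∀ Q : BQF, Q.disc = D → ∃ Q' : BQF, Q'.disc = D ∧ Q'.IsReduced ∧ BQF.Equiv Q Q') ∧
    {Q : BQF | Q.disc = D ∧ Q.IsReduced}.Finite ∧
    (∀ Q : BQF, Q.disc = D →
      (∃ Q' : BQF, Q'.IsReduced ∧ BQF.Equiv Q Q') ∧
      {Q' : BQF | Q'.IsReduced ∧ BQF.Equiv Q Q'}.Finite) := by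
  clear hD4
  -- the integer square root of D
  set s : ℤ := (Nat.sqrt D.toNat : ℤ) with hs
  have hs0 : 0 ≤ s := by positivity
  have hs1 : s^2 < D := by
    have h1 : (Nat.sqrt D.toNat)^2 ≤ D.toNat := Nat.sqrt_le' _
    have h2 : s^2 ≤ D := by
      rw [hs]
      exact_mod_cast le_trans (Nat.cast_le.mpr h1) (by simp [Int.toNat_of_nonneg hD.le])
    rcases lt_or_eq_of_le h2 with h | h
    · exact h
    · exact absurd ⟨s, (h.symm.trans (pow_two _))⟩ hDns
  have hs2 : D < (s+1)^2 := by
    have h1 : D.toNat < (Nat.sqrt D.toNat + 1)^2 := Nat.lt_succ_sqrt' _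
    have h2 := Int.toNat_of_nonneg hD.le
    rw [hs]
    push_cast
    nlinarith [Nat.cast_lt (α := ℤ).mpr h1]
  have hrs1 : (s:ℝ) < Real.sqrt D := by
    rw [show ((s:ℝ)) = Real.sqrt ((s:ℝ)^2) by rw [Real.sqrt_sq (by exact_mod_cast hs0)]]
    apply Real.sqrt_lt_sqrt (by positivity)
    exact_mod_cast hs1
  have hrs2 : Real.sqrt D < (s:ℝ)+1 := by
    have h01 : (0:ℝ) ≤ (s:ℝ) + 1 := by
      have : (0:ℝ) ≤ (s:ℝ) := by exact_mod_cast hs0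
      linarith
    rw [show ((s:ℝ)+1) = Real.sqrt (((s:ℝ)+1)^2) by rw [Real.sqrt_sq h01]]
    apply Real.sqrt_lt_sqrt (by positivity)
    exact_mod_cast hs2
  -- forms of discriminant D have nonzero outer coefficients
  have ha_ne : ∀ Q : BQF, Q.disc = D → Q.a ≠ 0 := by
    intro Q h h0
    exact hDns ⟨Q.b, by rw [← h, BQF.disc, h0]; ring⟩
  have hc_ne : ∀ Q : BQF, Q.disc = D → Q.c ≠ 0 := by
    intro Q h h0
    exact hDns ⟨Q.b, by rw [← h, BQF.disc, h0]; ring⟩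
  -- integer characterization of reducedness
  have hred : ∀ Q : BQF, Q.disc = D →
      (Q.IsReduced ↔ (Q.b ≤ s ∧ s < Q.b + 2* |Q.a| ∧ 2* |Q.a| - Q.b ≤ s)) := by
    intro Q hQD
    rw [BQF.IsReduced, hQD]
    have hcast : ((|Q.a| : ℤ) : ℝ) = |(Q.a : ℝ)| := by push_cast; ring
    constructor
    · rintro ⟨h1, h2⟩
      rw [abs_lt] at h1
      obtain ⟨h1a, h1b⟩ := h1
      refine ⟨?_, ?_, ?_⟩
      · have h : (Q.b : ℝ) < (s:ℝ) + 1 := lt_trans h2 hrs2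
        have h' : Q.b < s + 1 := by exact_mod_cast h
        omega
      · have h : (s:ℝ) < (Q.b : ℝ) + 2*((|Q.a| : ℤ):ℝ) := by rw [hcast]; linarith
        exact_mod_cast h
      · have h : 2*((|Q.a| : ℤ):ℝ) - (Q.b:ℝ) < (s:ℝ) + 1 := by rw [hcast]; linarith
        have h' : 2* |Q.a| - Q.b < s + 1 := by exact_mod_cast h
        omega
    · rintro ⟨h1, h2, h3⟩
      have hb : (Q.b:ℝ) ≤ (s:ℝ) := by exact_mod_cast h1
      have h2' : (s:ℝ) + 1 ≤ (Q.b:ℝ) + 2* |(Q.a:ℝ)| := by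
        rw [← hcast]
        have : (s:ℤ) + 1 ≤ Q.b + 2* |Q.a| := by omega
        exact_mod_cast this
      have h3' : 2* |(Q.a:ℝ)| - (Q.b:ℝ) ≤ (s:ℝ) := by
        rw [← hcast]; exact_mod_cast h3
      refine ⟨?_, by linarith⟩
      rw [abs_lt]
      constructor <;> linarith
  -- main existence statement
  have main : ∀ Q : BQF, Q.disc = D → ∃ Q' : BQF, Q'.disc = D ∧ Q'.IsReduced ∧ BQF.Equiv Q Q' := by
    intro Q hQ
    -- pick an equivalent form with |a| minimal
    have hne : {k : ℕ | ∃ Q' : BQF, BQF.Equiv Q Q' ∧ Q'.a.natAbs = k}.Nonempty :=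
      ⟨Q.a.natAbs, Q, BQF.equiv_refl Q, rfl⟩
    obtain ⟨Q₁, hQ₁e, hQ₁a⟩ := Nat.sInf_mem hne
    have hmin : ∀ Q₂ : BQF, BQF.Equiv Q Q₂ → Q₁.a.natAbs ≤ Q₂.a.natAbs := by
      intro Q₂ h
      rw [hQ₁a]
      exact Nat.sInf_le ⟨Q₂, h, rfl⟩
    have hQ₁D : Q₁.disc = D := (BQF.equiv_disc hQ₁e).trans hQ
    have ha1 : Q₁.a ≠ 0 := ha_ne _ hQ₁D
    -- translate b into the window (s - 2|a|, s]
    obtain ⟨n, hn1, hn2⟩ := exists_translate Q₁.a Q₁.b (s - 2* |Q₁.a|) ha1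
    set Q₃ : BQF := ⟨Q₁.a, Q₁.b + 2*Q₁.a*n, Q₁.a*n^2 + Q₁.b*n + Q₁.c⟩ with hQ₃def
    have hQ₃e : BQF.Equiv Q Q₃ := BQF.equiv_trans hQ₁e (BQF.equiv_T Q₁ n)
    have hQ₃D : Q₃.disc = D := (BQF.equiv_disc hQ₃e).trans hQ
    have hQ3a : Q₃.a = Q₁.a := rfl
    have hb1 : s - 2* |Q₃.a| < Q₃.b := by rw [hQ3a]; exact hn1
    have hb2 : Q₃.b ≤ s := by
      have : Q₃.b ≤ (s - 2* |Q₁.a|) + 2* |Q₁.a| := hn2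
      linarith
    clear_value Q₃
    -- |a| ≤ |c| by minimality
    have hC : Q₁.a.natAbs ≤ Q₃.c.natAbs :=
      hmin ⟨Q₃.c, -Q₃.b, Q₃.a⟩ (BQF.equiv_trans hQ₃e (BQF.equiv_S Q₃))
    have hAC : |Q₃.a| ≤ |Q₃.c| := by
      rw [hQ3a, Int.abs_eq_natAbs, Int.abs_eq_natAbs]
      exact_mod_cast hC
    have hA1 : 1 ≤ |Q₃.a| := Int.one_le_abs (by rw [hQ3a]; exact ha1)
    have heq : Q₃.b^2 - D = 4*Q₃.a*Q₃.c := by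
      have : Q₃.b^2 - 4*Q₃.a*Q₃.c = D := hQ₃D
      linarith
    have habs : |Q₃.b^2 - D| = 4* |Q₃.a| * |Q₃.c| := by
      rw [heq, abs_mul, abs_mul]
      norm_num
    have hc3 : Q₃.c ≠ 0 := hc_ne _ hQ₃D
    -- key: 4a² < D
    have h4a : 4*Q₃.a^2 < D := by
      by_contra hcon
      push_neg at hcon
      have hsqA : |Q₃.a|^2 = Q₃.a^2 := sq_abs _
      have hAC4 : 4* |Q₃.a| * |Q₃.a| ≤ 4* |Q₃.a| * |Q₃.c| :=
        mul_le_mul_of_nonneg_left hAC (by positivity)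
      rcases lt_trichotomy (Q₃.b^2) D with h | h | h
      · -- b² < D
        have hDe : D - Q₃.b^2 = 4* |Q₃.a| * |Q₃.c| := by
          rw [← habs, abs_of_neg (by linarith : Q₃.b^2 - D < 0)]; ring
        have hb0 : Q₃.b^2 ≤ 0 := by nlinarith
        have hb00 : Q₃.b = 0 := by nlinarith [sq_nonneg Q₃.b]
        have h2A : s + 1 ≤ 2* |Q₃.a| := by
          have := hb1; rw [hb00] at this; linarith
        nlinarith
      · exact hDns ⟨Q₃.b, (h.symm.trans (pow_two _))⟩
      · -- b² > D
        have hDe : Q₃.b^2 - D = 4* |Q₃.a| * |Q₃.c| := by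
          rw [← habs, abs_of_pos (by linarith : 0 < Q₃.b^2 - D)]
        rcases le_or_gt 0 Q₃.b with hbp | hbn
        · nlinarith
        · have hneg : -Q₃.b ≤ 2* |Q₃.a| - s - 1 := by linarith
          have hneg0 : 0 < -Q₃.b := by linarith
          have hsq : Q₃.b^2 ≤ (2* |Q₃.a| - s - 1)^2 := by nlinarith
          have hfac : 4*1*(s+1) ≤ 4* |Q₃.a| *(s+1) := by
            apply mul_le_mul_of_nonneg_right _ (by linarith)
            linarith
          nlinarith
    have h2As : 2* |Q₃.a| ≤ s := by
      by_contra hcon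
      push_neg at hcon
      have : s + 1 ≤ 2* |Q₃.a| := hcon
      nlinarith [sq_abs Q₃.a]
    refine ⟨Q₃, hQ₃D, ?_, hQ₃e⟩
    rw [hred Q₃ hQ₃D]
    refine ⟨hb2, by linarith, by linarith⟩
  -- finiteness of the set of reduced forms of discriminant D
  have hfin : {Q : BQF | Q.disc = D ∧ Q.IsReduced}.Finite := by
    apply Set.Finite.of_finite_image (f := fun Q : BQF => (Q.a, Q.b))
    · apply Set.Finite.subset (Set.finite_Icc ((-s, 1) : ℤ × ℤ) ((s, s) : ℤ × ℤ))
      rintro ⟨x, y⟩ ⟨Q, ⟨hQD, hQr⟩, hxy⟩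
      rw [hred Q hQD] at hQr
      obtain ⟨h1, h2, h3⟩ := hQr
      have hax : Q.a = x := congrArg Prod.fst hxy
      have hby : Q.b = y := congrArg Prod.snd hxy
      have habs : |Q.a| ≤ s := by omega
      have := abs_le.mp habs
      simp only [Set.mem_Icc, Prod.mk_le_mk]
      omega
    · rintro Q ⟨hQD, hQr⟩ Q' ⟨hQD', hQr'⟩ hpq
      simp only [Prod.mk.injEq] at hpq
      obtain ⟨hpa, hpb⟩ := hpq
      have han : Q'.a ≠ 0 := ha_ne _ hQD'
      have hcc : Q.c = Q'.c := by
        have e1 : Q.b^2 - 4*Q.a*Q.c = D := hQD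
        have e2 : Q'.b^2 - 4*Q'.a*Q'.c = D := hQD'
        rw [hpa, hpb] at e1
        have : 4*Q'.a*Q.c = 4*Q'.a*Q'.c := by linarith
        have h4 : (4:ℤ)*Q'.a ≠ 0 := by
          intro h0
          apply han
          omega
        exact mul_left_cancel₀ h4 this
      rcases Q with ⟨qa, qb, qc⟩
      rcases Q' with ⟨qa', qb', qc'⟩
      simp_all
  refine ⟨main, hfin, fun Q hQ => ⟨?_, ?_⟩⟩
  · obtain ⟨Q', _, h2, h3⟩ := main Q hQ
    exact ⟨Q', h2, h3⟩
  · apply hfin.subset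
    rintro Q' ⟨h1, h2⟩
    exact ⟨(BQF.equiv_disc h2).trans hQ, h1⟩
end

section
/- Let F be a number field, H/F a finite Galois extension containing all e-th roots of unity for a positive integer e, let α ∈ H^×, and let K := H(α^{1/e}) be obtained by adjoining an e-th root of α. Assume K/F is Galois. Define χ_cyc : Gal(H/F) → (ℤ/eℤ)^× by σ(ζ) = ζ^{χ_cyc(σ)} for every e-th root of unity ζ ∈ H. Then Gal(K/H) is contained in the center of Gal(K/F) (i.e., K/F is a central extension of Gal(H/F) by Gal(K/H)) if and only if for every σ ∈ Gal(H/F) there exists β ∈ H^× such that σ(α) = α^{χ_cyc(σ)}·β^e. -/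
/-- **Kummer-theoretic criterion for central extensions.**

Let `F` be a number field, `H/F` a finite Galois extension containing the `e`-th roots of
unity (`ζ` a primitive `e`-th root of unity in `H`), let `α ∈ H^×`, and let `K = H(α^{1/e})`
be obtained by adjoining an `e`-th root `θ` of `α`; assume `K/F` is Galois.  Then
`Gal(K/H)` lies in the centre of `Gal(K/F)` if and only if for every `σ ∈ Gal(H/F)` and
every representative `m` of `χ_cyc(σ)` (i.e. every `m` with `σ(ζ) = ζ^m`) there exists
`β ∈ H^×` with `σ(α) = α^m · β^e`. -/
theorem kummer_central_extension_criterion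
    (F H K : Type) [Field F] [Field H] [Field K]
    [Algebra F H] [Algebra H K] [Algebra F K] [IsScalarTower F H K]
    [NumberField F] [FiniteDimensional F H] [FiniteDimensional F K]
    [IsGalois F H] [IsGalois F K]
    (e : ℕ) (he : 0 < e)
    (ζ : H) (hζ : IsPrimitiveRoot ζ e)
    (α : H) (hα : α ≠ 0)
    (θ : K) (hθ : θ ^ e = algebraMap H K α)
    (hgen : Algebra.adjoin H ({θ} : Set K) = ⊤) :
    (∀ g : K ≃ₐ[F] K, (∀ x : H, g (algebraMap H K x) = algebraMap H K x) →
        g ∈ Subgroup.center (K ≃ₐ[F] K)) ↔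
      (∀ σ : H ≃ₐ[F] H, ∀ m : ℕ, σ ζ = ζ ^ m →
        ∃ β : H, β ≠ 0 ∧ σ α = α ^ m * β ^ e) := by
  have : NeZero e := ⟨he.ne'⟩
  have hι : Function.Injective (algebraMap H K) := (algebraMap H K).injective
  set ζ' : K := algebraMap H K ζ with hζ'def
  have hζ' : IsPrimitiveRoot ζ' e := hζ.map_of_injective (f := algebraMap H K) hι
  have hζ'0 : ζ' ≠ 0 := hζ'.ne_zero he.ne'
  have hθ0 : θ ≠ 0 := by
    intro h
    apply hα
    apply hι
    rw [← hθ, h, zero_pow he.ne', map_zero]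
  have hαK : algebraMap H K α ≠ 0 := fun h => hα (hι (by rw [h, map_zero]))
  -- root extraction
  have root_ex : ∀ x y : K, y ≠ 0 → x ^ e = y ^ e → ∃ a : ℕ, x = ζ' ^ a * y := by
    intro x y hy hxy
    have h1 : (x / y) ^ e = 1 := by
      rw [div_pow, hxy, div_self (pow_ne_zero _ hy)]
    obtain ⟨a, _, ha⟩ := hζ'.eq_pow_of_pow_eq_one h1
    exact ⟨a, by rw [ha, div_mul_cancel₀ _ hy]⟩
  -- equality of automorphisms from agreement on H and θ
  have key : ∀ (φ ψ : K ≃ₐ[F] K), (∀ x : H, φ (algebraMap H K x) = ψ (algebraMap H K x)) →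
      φ θ = ψ θ → φ = ψ := by
    intro φ ψ hHeq hθeq
    ext x
    have hx : x ∈ Algebra.adjoin H ({θ} : Set K) := hgen ▸ trivial
    induction hx using Algebra.adjoin_induction with
    | mem y hy => rw [Set.mem_singleton_iff] at hy; rw [hy]; exact hθeq
    | algebraMap r => exact hHeq r
    | add a b _ _ ha hb => rw [map_add, map_add, ha, hb]
    | mul a b _ _ ha hb => rw [map_mul, map_mul, ha, hb]
  constructor
  · -- centrality implies the Kummer condition
    intro hc σ m hm
    set τ : K ≃ₐ[F] K := σ.liftNormal K with hτdef
    have hτ : ∀ x : H, τ (algebraMap H K x) = algebraMap H K (σ x) := fun x =>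
      AlgEquiv.liftNormal_commutes σ K x
    have hτθ0 : τ θ ≠ 0 := fun h => hθ0 (by simpa using τ.injective (h.trans (map_zero τ).symm))
    have hθm0 : θ ^ m ≠ 0 := pow_ne_zero _ hθ0
    set b : K := τ θ / θ ^ m with hbdef
    -- b is fixed by Gal(K/H)
    have hbfix : ∀ g : K ≃ₐ[H] K, g b = b := by
      intro g
      set g' : K ≃ₐ[F] K := g.restrictScalars F with hg'def
      have hg'H : ∀ x : H, g' (algebraMap H K x) = algebraMap H K x := fun x => g.commutes x
      have hcen := Subgroup.mem_center_iff.mp (hc g' hg'H) τ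
      have hcomm : ∀ x : K, g' (τ x) = τ (g' x) := by
        intro x
        have := congrArg (fun f : K ≃ₐ[F] K => f x) hcen
        simpa [AlgEquiv.mul_apply] using this.symm
      have hgθe : (g' θ) ^ e = θ ^ e := by
        rw [← map_pow, hθ, hg'H, ← hθ]
      obtain ⟨a, ha⟩ := root_ex (g' θ) θ hθ0 hgθe
      have hτζ : τ ζ' = ζ' ^ m := by
        rw [hζ'def, hτ, hm, map_pow]
      have hgτθ : g' (τ θ) = ζ' ^ (a * m) * τ θ := by
        rw [hcomm, ha, map_mul, map_pow, hτζ, ← pow_mul, mul_comm m a]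
      have hgθm : g' (θ ^ m) = ζ' ^ (a * m) * θ ^ m := by
        rw [map_pow, ha, mul_pow, ← pow_mul]
      show g' b = b
      rw [hbdef, map_div₀, hgτθ, hgθm,
        mul_div_mul_left _ _ (pow_ne_zero _ hζ'0)]
    -- hence b comes from H
    have : IsGalois H K := IsGalois.tower_top_of_isGalois F H K
    have : FiniteDimensional H K := FiniteDimensional.right F H K
    have hbH : b ∈ Set.range (algebraMap H K) := by
      rw [← IntermediateField.mem_bot (F := H)]
      have hff := (IsGalois.tfae (F := H) (E := K)).out 0 1
      rw [← hff.mp ‹IsGalois H K›]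
      intro g
      exact hbfix g
    obtain ⟨β, hβ⟩ := hbH
    have hb0 : b ≠ 0 := div_ne_zero hτθ0 hθm0
    have hβ0 : β ≠ 0 := fun h => hb0 (by rw [← hβ, h, map_zero])
    refine ⟨β, hβ0, hι ?_⟩
    have hτθ : τ θ = b * θ ^ m := (div_mul_cancel₀ _ hθm0).symm
    have : algebraMap H K (σ α) = τ (algebraMap H K α) := (hτ α).symm
    rw [this, ← hθ, map_pow, hτθ, mul_pow, ← pow_mul, mul_comm m e, pow_mul, hθ,
      ← map_pow, ← hβ, ← map_pow, map_mul, mul_comm]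
  · -- the Kummer condition implies centrality
    intro hr g hg
    rw [Subgroup.mem_center_iff]
    intro h
    set σ : H ≃ₐ[F] H := h.restrictNormal H with hσdef
    have hσ : ∀ x : H, algebraMap H K (σ x) = h (algebraMap H K x) := fun x =>
      AlgEquiv.restrictNormal_commutes h H x
    have hσζe : (σ ζ) ^ e = 1 := by rw [← map_pow, hζ.pow_eq_one, map_one]
    obtain ⟨m, _, hm⟩ := hζ.eq_pow_of_pow_eq_one hσζe
    obtain ⟨β, hβ0, hβ⟩ := hr σ m hm.symm
    set β' : K := algebraMap H K β with hβ'def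
    have hβ'0 : β' ≠ 0 := fun hh => hβ0 (hι (by rw [map_zero]; exact hh))
    -- g θ = ζ'^a θ
    have hgθe : (g θ) ^ e = θ ^ e := by rw [← map_pow, hθ, hg, ← hθ]
    obtain ⟨a, ha⟩ := root_ex (g θ) θ hθ0 hgθe
    -- h θ = ζ'^j θ^m β'
    have hhθe : (h θ) ^ e = (θ ^ m * β') ^ e := by
      rw [← map_pow, hθ, ← hσ, hβ, map_mul, map_pow, map_pow, mul_pow, ← pow_mul,
        mul_comm m e, pow_mul, hβ'def, hθ]
    obtain ⟨j, hj⟩ := root_ex (h θ) (θ ^ m * β') (mul_ne_zero (pow_ne_zero _ hθ0) hβ'0) hhθe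
    -- h ζ' = ζ'^m ; g fixes ζ', β'
    have hhζ' : h ζ' = ζ' ^ m := by rw [hζ'def, ← hσ, hm.symm, map_pow]
    have hgζ' : g ζ' = ζ' := hg ζ
    have hgβ' : g β' = β' := hg β
    apply key
    · intro x
      show h (g (algebraMap H K x)) = g (h (algebraMap H K x))
      rw [hg, ← hσ]
      exact (hg (σ x)).symm
    · show h (g θ) = g (h θ)
      rw [ha, hj, map_mul, map_pow, map_mul, map_pow, map_mul, map_pow,
        hhζ', hj, hgζ', hgβ', ha, mul_pow, ← pow_mul, ← pow_mul]
      ring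
end
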